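/- Let {X_t}_{t∈ℕ⁺} be adapted to {F_t} with E[X_t | F_{t−1}] = μ and E[(X_t − μ)² | F_{t−1}] ≤ σ² almost surely for all t ∈ ℕ⁺, and let {λ_t}_{t∈ℕ⁺} be any predictable process. With aCI_t^{SN+} and aCI_t^{SN−} as in the self-normalized anticonfidence sequence construction, the sets CI_t^{SN} = ℝ \ (aCI_t^{SN+} ∪ aCI_t^{SN−}) satisfy P(∀ t ∈ ℕ⁺, μ ∈ CI_t^{SN}) ≥ 1 − α, i.e. {CI_t^{SN}} is a (1−α)-confidence sequence for μ. -/

import Mathlib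

open MeasureTheory ProbabilityTheory Filter

section Aux
open Finset

lemma delyon_aux (x : ℝ) : 1 ≤ (1 + x + x^2/3) * Real.exp (x^2/6 - x) := by
  set f : ℝ → ℝ := fun y => (1 + y + y^2/3) * Real.exp (y^2/6 - y) with hf
  have hd : ∀ y : ℝ, HasDerivAt f (y^3/9 * Real.exp (y^2/6 - y)) y := by
    intro y
    have h1 : HasDerivAt (fun z : ℝ => 1 + z + z^2/3) (1 + 2*y/3) y := by
      have := ((hasDerivAt_id' y).const_add 1).add ((hasDerivAt_pow 2 y).div_const 3)
      refine this.congr_deriv ?_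
      push_cast; ring
    have h2 : HasDerivAt (fun z : ℝ => z^2/6 - z) (2*y/6 - 1) y := by
      have := ((hasDerivAt_pow 2 y).div_const 6).sub (hasDerivAt_id' y)
      refine this.congr_deriv ?_
      push_cast; ring
    have := h1.mul h2.exp
    refine this.congr_deriv ?_
    ring
  have hcont : Continuous f := by fun_prop
  have hf0 : f 0 = 1 := by simp [hf]
  have key : ∀ y : ℝ, f 0 ≤ f y := by
    intro y
    rcases le_total 0 y with hy | hy
    · have hmono : MonotoneOn f (Set.Ici 0) :=
        monotoneOn_of_deriv_nonneg (convex_Ici 0) hcont.continuousOn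
          (fun z _ => (hd z).differentiableAt.differentiableWithinAt)
          (by
            intro z hz
            rw [interior_Ici] at hz
            rw [(hd z).deriv]
            have : (0:ℝ) < z := hz
            positivity)
      exact hmono Set.self_mem_Ici hy hy
    · have hanti : AntitoneOn f (Set.Iic 0) :=
        antitoneOn_of_deriv_nonpos (convex_Iic 0) hcont.continuousOn
          (fun z _ => (hd z).differentiableAt.differentiableWithinAt)
          (by
            intro z hz
            rw [interior_Iic] at hz
            rw [(hd z).deriv]
            have hz' : z < 0 := hz
            have h3 : z^3 ≤ 0 := by nlinarith [sq_nonneg z]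
            have := Real.exp_pos (z^2/6 - z)
            nlinarith)
      exact hanti hy Set.self_mem_Iic hy
  have := key x
  rwa [hf0] at this

lemma delyon (x : ℝ) : Real.exp (x - x^2/6) ≤ 1 + x + x^2/3 := by
  have h := delyon_aux x
  have he : Real.exp (x - x^2/6) * Real.exp (x^2/6 - x) = 1 := by
    rw [← Real.exp_add]; norm_num
  nlinarith [Real.exp_pos (x - x^2/6), Real.exp_pos (x^2/6 - x)]

lemma ville {Ω : Type*} {mΩ : MeasurableSpace Ω} {P : Measure Ω} [IsProbabilityMeasure P]
    {ℱ : Filtration ℕ mΩ} {f : ℕ → Ω → ℝ} (hf : Supermartingale f ℱ P)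
    (hnonneg : ∀ t ω, 0 ≤ f t ω) {ε : ℝ} (hε : 0 < ε) :
    P {ω | ∃ t, ε ≤ f t ω} ≤ ENNReal.ofReal ((∫ ω, f 0 ω ∂P) / ε) := by
  set S : ℕ → Set Ω := fun n => {ω | ∃ k ≤ n, ε ≤ f k ω} with hS
  have hSmono : Monotone S := by
    intro a b hab ω ⟨k, hk, hω⟩
    exact ⟨k, hk.trans hab, hω⟩
  have hunion : {ω | ∃ t, ε ≤ f t ω} = ⋃ n, S n := by
    ext ω
    simp only [Set.mem_setOf_eq, Set.mem_iUnion, hS]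
    exact ⟨fun ⟨t, ht⟩ => ⟨t, t, le_rfl, ht⟩, fun ⟨n, k, _, hk⟩ => ⟨k, hk⟩⟩
  have hbound : ∀ n, P (S n) ≤ ENNReal.ofReal ((∫ ω, f 0 ω ∂P) / ε) := by
    intro n
    set τ : Ω → WithTop ℕ := fun ω => (hittingBtwn f (Set.Ici ε) 0 n ω : ℕ) with hτdef
    have hτ : IsStoppingTime ℱ τ :=
      hf.stronglyAdapted.adapted.isStoppingTime_hittingBtwn measurableSet_Ici
    have hτ_le : ∀ ω, τ ω ≤ n := fun ω => WithTop.coe_le_coe.2 (hittingBtwn_le ω)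
    have hint : Integrable (stoppedValue f τ) P :=
      integrable_stoppedValue ℕ hτ hf.integrable hτ_le
    -- expected stopped value ≤ ∫ f 0
    have h1 : ∫ ω, stoppedValue f τ ω ∂P ≤ ∫ ω, f 0 ω ∂P := by
      have := hf.neg.expected_stoppedValue_mono (isStoppingTime_const ℱ 0) hτ
        (fun ω => WithTop.coe_le_coe.2 (Nat.zero_le _)) hτ_le
      simp only [stoppedValue, Pi.neg_apply, integral_neg, neg_le_neg_iff] at this
      exact this
    -- on S n, stoppedValue ≥ ε
    have h2 : ∀ ω ∈ S n, ε ≤ stoppedValue f τ ω := by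
      intro ω hω
      obtain ⟨k, hk, hεk⟩ := hω
      refine stoppedValue_hittingBtwn_mem ?_
      exact ⟨k, by simp [hk], hεk⟩
    have hSmeas : MeasurableSet (S n) := by
      have : S n = ⋃ k ∈ Set.Iic n, {ω | ε ≤ f k ω} := by
        ext ω; simp [hS]
      rw [this]
      refine MeasurableSet.biUnion ((Set.to_countable _)) fun k _ => ?_
      exact measurableSet_le measurable_const
        ((hf.stronglyMeasurable k).measurable.le (ℱ.le k))
    have h3 : ε * (P (S n)).toReal ≤ ∫ ω in S n, stoppedValue f τ ω ∂P :=
      by have := setIntegral_ge_of_const_le hSmeas (measure_ne_top _ _) h2 hint.integrableOn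
         rw [measureReal_def, smul_eq_mul, mul_comm] at this; exact this
    have h4 : ∫ ω in S n, stoppedValue f τ ω ∂P ≤ ∫ ω, stoppedValue f τ ω ∂P :=
      setIntegral_le_integral hint (Filter.Eventually.of_forall fun ω => hnonneg _ _)
    have h5 : (P (S n)).toReal ≤ (∫ ω, f 0 ω ∂P) / ε := by
      rw [le_div_iff₀ hε]
      nlinarith [h1, h3, h4]
    calc P (S n) = ENNReal.ofReal ((P (S n)).toReal) := by
          rw [ENNReal.ofReal_toReal (measure_ne_top _ _)]
      _ ≤ _ := ENNReal.ofReal_le_ofReal h5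
  rw [hunion, Directed.measure_iUnion hSmono.directed_le]
  exact iSup_le hbound


lemma sum_Icc_one_succ {f : ℕ → ℝ} (i : ℕ) :
    ∑ k ∈ Finset.Icc 1 (i+1), f k = (∑ k ∈ Finset.Icc 1 i, f k) + f (i+1) := by
  rw [← Finset.Ico_add_one_right_eq_Icc, Finset.sum_Ico_succ_top (by omega), Finset.Ico_add_one_right_eq_Icc]

lemma exp_supermartingale {Ω : Type*} {mΩ : MeasurableSpace Ω} {P : Measure Ω}
    [IsProbabilityMeasure P] (ℱ : Filtration ℕ mΩ) (X l : ℕ → Ω → ℝ) (μ σ : ℝ)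
    (hX_adapted : Adapted ℱ X) (hX_sq : ∀ t, 1 ≤ t → MemLp (X t) 2 P)
    (hmean : ∀ t, 1 ≤ t → P[X t | ℱ (t - 1)] =ᵐ[P] fun _ => μ)
    (hvar : ∀ t, 1 ≤ t → ∀ᵐ ω ∂P, (P[fun ω' => (X t ω' - μ) ^ 2 | ℱ (t - 1)]) ω ≤ σ ^ 2)
    (hl_pred : ∀ t, 1 ≤ t → StronglyMeasurable[ℱ (t - 1)] (l t))
    (s : ℝ) (hs : s^2 = 1) :
    Supermartingale (fun t ω => Real.exp (∑ k ∈ Finset.Icc 1 t,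
      (s * l k ω * (X k ω - μ) - (l k ω)^2 * ((X k ω - μ)^2 + 2*σ^2)/6))) ℱ P := by
  set D : ℕ → Ω → ℝ := fun k ω =>
    s * l k ω * (X k ω - μ) - (l k ω)^2 * ((X k ω - μ)^2 + 2*σ^2)/6 with hD
  set M : ℕ → Ω → ℝ := fun t ω => Real.exp (∑ k ∈ Finset.Icc 1 t, D k ω) with hM
  -- pointwise bound on increments
  have hD_le : ∀ k ω, D k ω ≤ 3/2 := by
    intro k ω
    simp only [hD]
    nlinarith [sq_nonneg (s * l k ω * (X k ω - μ) - 3), sq_nonneg (l k ω * σ),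
      sq_nonneg (l k ω * (X k ω - μ)), hs, sq_nonneg (X k ω - μ), sq_nonneg (l k ω)]
  have hM_le : ∀ t ω, M t ω ≤ Real.exp (t * (3/2)) := by
    intro t ω
    simp only [hM]
    refine Real.exp_le_exp.2 ?_
    calc ∑ k ∈ Finset.Icc 1 t, D k ω ≤ (Finset.Icc 1 t).card • (3/2 : ℝ) :=
          Finset.sum_le_card_nsmul _ _ _ (fun k _ => hD_le k ω)
      _ = (t : ℝ) * (3/2) := by
          simp [Nat.card_Icc, nsmul_eq_mul]
  have hM_pos : ∀ t ω, 0 < M t ω := fun t ω => Real.exp_pos _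
  -- measurability
  have hD_meas : ∀ k t, 1 ≤ k → k ≤ t → StronglyMeasurable[ℱ t] (D k) := by
    intro k t hk hkt
    have hl' : StronglyMeasurable[ℱ t] (l k) :=
      (hl_pred k hk).mono (ℱ.mono (by omega))
    have hX' : StronglyMeasurable[ℱ t] (X k) := (hX_adapted k).stronglyMeasurable.mono (ℱ.mono hkt)
    exact ((hl'.const_mul s).mul (hX'.sub stronglyMeasurable_const)).sub
      (((hl'.pow 2).mul (((hX'.sub stronglyMeasurable_const).pow 2).add
        stronglyMeasurable_const)).mul_const (6⁻¹ : ℝ))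
  have hM_meas : ∀ t, StronglyMeasurable[ℱ t] (M t) := by
    intro t
    have hsum : StronglyMeasurable[ℱ t] (fun ω => ∑ k ∈ Finset.Icc 1 t, D k ω) := by
      refine Finset.stronglyMeasurable_fun_sum _ (fun k hk => ?_)
      rw [Finset.mem_Icc] at hk
      exact hD_meas k t hk.1 hk.2
    exact Real.continuous_exp.comp_stronglyMeasurable hsum
  have hM_int : ∀ t, Integrable (M t) P := by
    intro t
    refine ⟨((hM_meas t).mono (ℱ.le t)).aestronglyMeasurable, ?_⟩
    refine HasFiniteIntegral.of_bounded (C := Real.exp (t * (3/2))) ?_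
    filter_upwards with ω
    rw [Real.norm_eq_abs, abs_of_pos (hM_pos t ω)]
    exact hM_le t ω
  refine supermartingale_of_setIntegral_succ_le (fun t => hM_meas t) hM_int ?_
  intro i A hA
  -- notation for the step
  set lam : Ω → ℝ := l (i+1) with hlam
  set Y : Ω → ℝ := fun ω => X (i+1) ω - μ with hYdef
  have h1i : 1 ≤ i + 1 := by omega
  have hl : StronglyMeasurable[ℱ i] lam := by
    have := hl_pred (i+1) h1i
    simpa using this
  have hY_mem : MemLp Y 2 P := (hX_sq (i+1) h1i).sub (memLp_const μ)
  have hY_int : Integrable Y P := hY_mem.integrable (by norm_num)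
  have hY2_int : Integrable (fun ω => Y ω ^ 2) P := hY_mem.integrable_sq
  have hX_int : Integrable (X (i+1)) P :=
    (hX_sq (i+1) h1i).integrable (by norm_num)
  have hcondY : P[Y | ℱ i] =ᵐ[P] fun _ => 0 := by
    have h1 : P[Y | ℱ i] =ᵐ[P] P[X (i+1) | ℱ i] - P[fun _ => μ | ℱ i] :=
      condExp_sub hX_int (integrable_const μ) _
    have h2 := hmean (i+1) h1i
    simp only [Nat.add_sub_cancel] at h2
    filter_upwards [h1, h2] with ω hω1 hω2
    rw [hω1, Pi.sub_apply, hω2, condExp_const (ℱ.le i)]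
    simp
  have hcondY2 : ∀ᵐ ω ∂P, (P[fun ω' => Y ω' ^ 2 | ℱ i]) ω ≤ σ ^ 2 := by
    have := hvar (i+1) h1i
    simp only [Nat.add_sub_cancel] at this
    exact this
  -- pull-out property helper
  have pull : ∀ (g : Ω → ℝ), StronglyMeasurable[ℱ i] g → (∃ C, ∀ ω, |g ω| ≤ C) →
      ∀ (Z : Ω → ℝ), Integrable Z P →
      ∫ ω, g ω * Z ω ∂P = ∫ ω, g ω * (P[Z | ℱ i]) ω ∂P := by
    intro g hg hgbdd Z hZ
    obtain ⟨Cg, hCg⟩ := hgbdd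
    have hgZ : Integrable (fun ω => g ω * Z ω) P :=
      hZ.bdd_mul ((hg.mono (ℱ.le i)).aestronglyMeasurable)
        (c := Cg) (ae_of_all _ fun ω => by simpa [Real.norm_eq_abs] using hCg ω)
    have h2 : P[fun ω => g ω * Z ω | ℱ i] =ᵐ[P] fun ω => g ω * (P[Z | ℱ i]) ω :=
      condExp_mul_of_stronglyMeasurable_left hg hgZ hZ
    calc ∫ ω, g ω * Z ω ∂P = ∫ ω, (P[fun ω' => g ω' * Z ω' | ℱ i]) ω ∂P :=
          (integral_condExp (ℱ.le i) (f := fun ω => g ω * Z ω)).symm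
      _ = ∫ ω, g ω * (P[Z | ℱ i]) ω ∂P := integral_congr_ae h2
  set C : ℝ := Real.exp (i * (3/2)) with hCdef
  have hC0 : 0 ≤ C := (Real.exp_pos _).le
  set c : Ω → ℝ := fun ω => Real.exp (-(lam ω ^ 2 * σ ^ 2 / 3)) with hc
  have hc_meas : StronglyMeasurable[ℱ i] c :=
    Real.continuous_exp.comp_stronglyMeasurable
      ((((hl.pow 2).mul_const (σ^2)).mul_const (3⁻¹:ℝ)).neg)
  have hc_pos : ∀ ω, 0 < c ω := fun ω => Real.exp_pos _
  have hc_le1 : ∀ ω, c ω ≤ 1 := by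
    intro ω
    have h0 : (0:ℝ) ≤ lam ω ^ 2 * σ ^ 2 / 3 := by positivity
    have h1 : -(lam ω ^ 2 * σ ^ 2 / 3) ≤ 0 := by linarith
    exact (Real.exp_le_exp.2 h1).trans_eq Real.exp_zero
  have hM_succ : ∀ ω, M (i+1) ω = M i ω * Real.exp (D (i+1) ω) := by
    intro ω
    simp only [hM]
    rw [sum_Icc_one_succ (f := fun k => D k ω) i, Real.exp_add]
  have hx2 : ∀ ω, (s * lam ω * Y ω)^2 = lam ω^2 * Y ω^2 := by
    intro ω; rw [mul_pow, mul_pow, hs, one_mul]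
  have hexpD : ∀ ω, Real.exp (D (i+1) ω) ≤
      (1 + s * lam ω * Y ω + (s * lam ω * Y ω)^2/3) * c ω := by
    intro ω
    have hsplit : D (i+1) ω =
        (s * lam ω * Y ω - (s * lam ω * Y ω)^2/6) + (-(lam ω ^ 2 * σ ^ 2 / 3)) := by
      rw [hx2 ω]
      simp only [hD, hYdef, hlam]
      ring
    rw [hsplit, Real.exp_add]
    exact mul_le_mul_of_nonneg_right (delyon _) (Real.exp_pos _).le
  -- per-truncation-level inequality
  have hBmeas : ∀ K : ℕ, MeasurableSet[ℱ i] (A ∩ {ω | |lam ω| ≤ (K:ℝ)}) := by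
    intro K
    exact hA.inter (hl.measurable (measurableSet_le measurable_abs measurable_const))
  have step : ∀ K : ℕ, ∫ ω in A ∩ {ω | |lam ω| ≤ (K:ℝ)}, M (i+1) ω ∂P ≤
      ∫ ω in A ∩ {ω | |lam ω| ≤ (K:ℝ)}, M i ω ∂P := by
    intro K
    set B : Set Ω := A ∩ {ω | |lam ω| ≤ (K:ℝ)} with hB
    have hB_meas : MeasurableSet[ℱ i] B := hBmeas K
    have hB_meas0 : MeasurableSet B := ℱ.le i _ hB_meas
    set w : Ω → ℝ := B.indicator (fun ω => M i ω * c ω) with hw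
    have hw_meas : StronglyMeasurable[ℱ i] w := ((hM_meas i).mul hc_meas).indicator hB_meas
    have hw_nonneg : ∀ ω, 0 ≤ w ω := fun ω =>
      Set.indicator_nonneg (fun ω _ => mul_nonneg (hM_pos i ω).le (hc_pos ω).le) ω
    have hw_le : ∀ ω, w ω ≤ C := by
      intro ω
      rw [hw]
      by_cases hω : ω ∈ B
      · rw [Set.indicator_of_mem hω]
        calc M i ω * c ω ≤ M i ω * 1 :=
              mul_le_mul_of_nonneg_left (hc_le1 ω) (hM_pos i ω).le
          _ = M i ω := mul_one _
          _ ≤ C := hM_le i ω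
      · rw [Set.indicator_of_notMem hω]; exact hC0
    have hw_abs : ∀ ω, |w ω| ≤ C := fun ω => by
      rw [abs_of_nonneg (hw_nonneg ω)]; exact hw_le ω
    have hwlam_bdd : ∀ ω, |w ω * (s * lam ω)| ≤ C * (|s| * K) := by
      intro ω
      by_cases hω : ω ∈ B
      · have h1 : |lam ω| ≤ (K:ℝ) := hω.2
        rw [abs_mul, abs_mul]
        refine mul_le_mul (hw_abs ω) ?_ (by positivity) hC0
        exact mul_le_mul_of_nonneg_left h1 (abs_nonneg s)
      · have : w ω = 0 := by rw [hw]; exact Set.indicator_of_notMem hω _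
        rw [this]
        simp only [zero_mul, abs_zero]
        positivity
    have hwlam2_bdd : ∀ ω, |w ω * lam ω ^ 2 / 3| ≤ C * (K:ℝ)^2 / 3 := by
      intro ω
      by_cases hω : ω ∈ B
      · have h1 : |lam ω| ≤ (K:ℝ) := hω.2
        have h2 : lam ω ^ 2 ≤ (K:ℝ)^2 := by
          rw [← sq_abs]
          exact pow_le_pow_left₀ (abs_nonneg _) h1 2
        rw [abs_div, abs_mul, abs_of_nonneg (sq_nonneg (lam ω))]
        have : |w ω| * lam ω ^ 2 ≤ C * (K:ℝ)^2 :=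
          mul_le_mul (hw_abs ω) h2 (sq_nonneg _) hC0
        simp only [abs_of_nonneg (by norm_num : (0:ℝ) ≤ 3)]
        linarith
      · have : w ω = 0 := by rw [hw]; exact Set.indicator_of_notMem hω _
        rw [this]
        simp only [zero_mul, zero_div, abs_zero]
        positivity
    have key1 : ∀ ω, B.indicator (M (i+1)) ω ≤
        w ω + (w ω * (s * lam ω)) * Y ω + (w ω * lam ω ^ 2 / 3) * Y ω ^ 2 := by
      intro ω
      by_cases hω : ω ∈ B
      · rw [Set.indicator_of_mem hω, hw]
        rw [Set.indicator_of_mem hω]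
        have h2 : M (i+1) ω ≤ M i ω * ((1 + s * lam ω * Y ω + (s * lam ω * Y ω)^2/3) * c ω) := by
          rw [hM_succ ω]
          exact mul_le_mul_of_nonneg_left (hexpD ω) (hM_pos i ω).le
        refine h2.trans_eq ?_
        rw [hx2 ω]
        ring
      · rw [Set.indicator_of_notMem hω]
        have : w ω = 0 := by rw [hw]; exact Set.indicator_of_notMem hω _
        rw [this]
        ring_nf
        exact le_refl 0
    have key2 : ∀ ω, w ω + (w ω * lam ω ^ 2 / 3) * σ ^ 2 ≤ B.indicator (M i) ω := by
      intro ω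
      by_cases hω : ω ∈ B
      · rw [Set.indicator_of_mem hω, hw, Set.indicator_of_mem hω]
        have hu : lam ω^2*σ^2/3 + 1 ≤ Real.exp (lam ω^2*σ^2/3) := Real.add_one_le_exp _
        have hce : c ω * Real.exp (lam ω^2*σ^2/3) = 1 := by
          rw [hc]
          simp only
          rw [← Real.exp_add]
          simp
        have h3 : c ω * (lam ω^2*σ^2/3 + 1) ≤ 1 := by
          nlinarith [hc_pos ω]
        nlinarith [hM_pos i ω]
      · have : w ω = 0 := by rw [hw]; exact Set.indicator_of_notMem hω _
        rw [Set.indicator_of_notMem hω, this]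
        norm_num
    -- integrability
    have int_ind_M1 : Integrable (B.indicator (M (i+1))) P := (hM_int (i+1)).indicator hB_meas0
    have int_ind_M0 : Integrable (B.indicator (M i)) P := (hM_int i).indicator hB_meas0
    have int_w : Integrable w P := by
      refine ⟨((hw_meas.mono (ℱ.le i)).aestronglyMeasurable), ?_⟩
      refine HasFiniteIntegral.of_bounded (C := C) ?_
      filter_upwards with ω
      rw [Real.norm_eq_abs]
      exact hw_abs ω
    have hg2_meas : StronglyMeasurable[ℱ i] (fun ω => w ω * (s * lam ω)) :=
      hw_meas.mul (hl.const_mul s)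
    have hg3_meas : StronglyMeasurable[ℱ i] (fun ω => w ω * lam ω ^ 2 / 3) :=
      (hw_meas.mul (hl.pow 2)).mul_const (3⁻¹:ℝ)
    have int_t2 : Integrable (fun ω => (w ω * (s * lam ω)) * Y ω) P :=
      hY_int.bdd_mul ((hg2_meas.mono (ℱ.le i)).aestronglyMeasurable)
        (c := C * (|s| * K)) (ae_of_all _ fun ω => by rw [Real.norm_eq_abs]; exact hwlam_bdd ω)
    have int_t3 : Integrable (fun ω => (w ω * lam ω ^ 2 / 3) * Y ω ^ 2) P :=
      hY2_int.bdd_mul ((hg3_meas.mono (ℱ.le i)).aestronglyMeasurable)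
        (c := C * (K:ℝ)^2 / 3) (ae_of_all _ fun ω => by rw [Real.norm_eq_abs]; exact hwlam2_bdd ω)
    have int_t3' : Integrable (fun ω => (w ω * lam ω ^ 2 / 3) * σ ^ 2) P :=
      (integrable_const (σ^2 : ℝ)).bdd_mul ((hg3_meas.mono (ℱ.le i)).aestronglyMeasurable)
        (c := C * (K:ℝ)^2 / 3) (ae_of_all _ fun ω => by rw [Real.norm_eq_abs]; exact hwlam2_bdd ω)
    have int_cond3 : Integrable (fun ω => (w ω * lam ω ^ 2 / 3) *
        (P[fun ω' => Y ω' ^ 2 | ℱ i]) ω) P :=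
      integrable_condExp.bdd_mul ((hg3_meas.mono (ℱ.le i)).aestronglyMeasurable)
        (c := C * (K:ℝ)^2 / 3) (ae_of_all _ fun ω => by rw [Real.norm_eq_abs]; exact hwlam2_bdd ω)
    have e2 : ∫ ω, (w ω * (s * lam ω)) * Y ω ∂P = 0 := by
      rw [pull (fun ω => w ω * (s * lam ω)) hg2_meas ⟨C * (|s| * K), hwlam_bdd⟩ Y hY_int]
      calc ∫ ω, (w ω * (s * lam ω)) * (P[Y | ℱ i]) ω ∂P = ∫ _, (0:ℝ) ∂P := by
            refine integral_congr_ae (hcondY.mono fun ω hω => ?_)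
            show w ω * (s * lam ω) * (P[Y | ℱ i]) ω = 0
            rw [hω]
            simp
        _ = 0 := integral_zero _ _
    have e3 : ∫ ω, (w ω * lam ω ^ 2 / 3) * Y ω ^ 2 ∂P ≤
        ∫ ω, (w ω * lam ω ^ 2 / 3) * σ ^ 2 ∂P := by
      rw [pull (fun ω => w ω * lam ω ^ 2 / 3) hg3_meas ⟨C * (K:ℝ)^2 / 3, hwlam2_bdd⟩
        (fun ω => Y ω ^ 2) hY2_int]
      refine integral_mono_ae int_cond3 int_t3' ?_
      filter_upwards [hcondY2] with ω hω
      have hg3_nonneg : 0 ≤ w ω * lam ω ^ 2 / 3 :=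
        div_nonneg (mul_nonneg (hw_nonneg ω) (sq_nonneg _)) (by norm_num)
      exact mul_le_mul_of_nonneg_left hω hg3_nonneg
    calc ∫ ω in B, M (i+1) ω ∂P = ∫ ω, B.indicator (M (i+1)) ω ∂P :=
          (integral_indicator hB_meas0).symm
      _ ≤ ∫ ω, (w ω + (w ω * (s * lam ω)) * Y ω + (w ω * lam ω ^ 2 / 3) * Y ω ^ 2) ∂P :=
          integral_mono int_ind_M1 ((int_w.add int_t2).add int_t3) key1
      _ = (∫ ω, w ω ∂P) + (∫ ω, (w ω * (s * lam ω)) * Y ω ∂P) +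
            ∫ ω, (w ω * lam ω ^ 2 / 3) * Y ω ^ 2 ∂P := by
          have int_sum12 : Integrable (fun ω => w ω + (w ω * (s * lam ω)) * Y ω) P :=
            int_w.add int_t2
          rw [integral_add (f := fun ω => w ω + (w ω * (s * lam ω)) * Y ω)
            (g := fun ω => (w ω * lam ω ^ 2 / 3) * Y ω ^ 2) int_sum12 int_t3,
            integral_add (f := fun ω => w ω) (g := fun ω => (w ω * (s * lam ω)) * Y ω)
            int_w int_t2]
      _ ≤ (∫ ω, w ω ∂P) + 0 + ∫ ω, (w ω * lam ω ^ 2 / 3) * σ ^ 2 ∂P := by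
          rw [e2]
          exact add_le_add le_rfl e3
      _ = ∫ ω, (w ω + (w ω * lam ω ^ 2 / 3) * σ ^ 2) ∂P := by
          rw [add_zero, ← integral_add (f := fun ω => w ω)
            (g := fun ω => (w ω * lam ω ^ 2 / 3) * σ ^ 2) int_w int_t3']
      _ ≤ ∫ ω, B.indicator (M i) ω ∂P := integral_mono (int_w.add int_t3') int_ind_M0 key2
      _ = ∫ ω in B, M i ω ∂P := integral_indicator hB_meas0
  -- take the limit in K
  have hmonoK : Monotone (fun K : ℕ => A ∩ {ω | |lam ω| ≤ (K:ℝ)}) := by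
    intro a b hab ω hω
    refine ⟨hω.1, ?_⟩
    have h2 : |lam ω| ≤ (a:ℝ) := hω.2
    exact le_trans h2 (Nat.cast_le.2 hab)
  have hmeasK : ∀ K : ℕ, MeasurableSet (A ∩ {ω | |lam ω| ≤ (K:ℝ)}) :=
    fun K => ℱ.le i _ (hBmeas K)
  have hUnion : (⋃ K : ℕ, A ∩ {ω | |lam ω| ≤ (K:ℝ)}) = A := by
    ext ω
    simp only [Set.mem_iUnion, Set.mem_inter_iff, Set.mem_setOf_eq]
    constructor
    · rintro ⟨K, hK, _⟩; exact hK
    · intro hω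
      obtain ⟨K, hK⟩ := exists_nat_ge (|lam ω|)
      exact ⟨K, hω, hK⟩
  have t1 := tendsto_setIntegral_of_monotone hmeasK hmonoK
    ((hM_int (i+1)).integrableOn (s := ⋃ K : ℕ, A ∩ {ω | |lam ω| ≤ (K:ℝ)}))
  have t0 := tendsto_setIntegral_of_monotone hmeasK hmonoK
    ((hM_int i).integrableOn (s := ⋃ K : ℕ, A ∩ {ω | |lam ω| ≤ (K:ℝ)}))
  rw [hUnion] at t1 t0
  exact le_of_tendsto_of_tendsto' t1 t0 step

lemma sum_id (t : ℕ) (lv Xv : ℕ → ℝ) (μ σ s C : ℝ) :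
    (∑ i ∈ Finset.Icc 1 t, (lv i) ^ 2) / 6 * μ ^ 2 -
      ((∑ i ∈ Finset.Icc 1 t, (lv i) ^ 2 * Xv i) / 3 -
        s * ∑ i ∈ Finset.Icc 1 t, lv i) * μ +
      (C - s * ∑ i ∈ Finset.Icc 1 t, lv i * Xv i +
        (∑ i ∈ Finset.Icc 1 t, (lv i) ^ 2 * (Xv i) ^ 2 +
          2 * σ ^ 2 * ∑ i ∈ Finset.Icc 1 t, (lv i) ^ 2) / 6) =
    C - ∑ i ∈ Finset.Icc 1 t,
      (s * lv i * (Xv i - μ) - (lv i) ^ 2 * ((Xv i - μ) ^ 2 + 2 * σ ^ 2) / 6) := by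
  have h : ∀ i ∈ Finset.Icc 1 t,
      s * lv i * (Xv i - μ) - (lv i) ^ 2 * ((Xv i - μ) ^ 2 + 2 * σ ^ 2) / 6 =
      s * (lv i * Xv i) - (μ * s) * lv i - ((lv i)^2 * (Xv i)^2) / 6 +
        (μ / 3) * ((lv i)^2 * Xv i) - (μ^2 / 6) * ((lv i)^2) - (σ^2 / 3) * ((lv i)^2) := by
    intro i _
    ring
  rw [Finset.sum_congr rfl h]
  simp only [Finset.sum_add_distrib, Finset.sum_sub_distrib, ← Finset.mul_sum, ← Finset.sum_div]
  ring

end Aux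

/-- **Self-normalized confidence sequence.** With `aCI_t^{SN±}` the self-normalized
anticonfidence sets, the sets `CI_t^{SN} = ℝ \ (aCI_t^{SN+} ∪ aCI_t^{SN−})` form a
`(1-α)`-confidence sequence for `μ`. -/
theorem self_normalized_confidence_sequence
    {Ω : Type*} {mΩ : MeasurableSpace Ω} {P : Measure Ω} [IsProbabilityMeasure P]
    (ℱ : Filtration ℕ mΩ) (X l : ℕ → Ω → ℝ) (μ σ α : ℝ)
    (hα : α ∈ Set.Ioo (0 : ℝ) 1)
    (hX_adapted : Adapted ℱ X)
    (hX_sq : ∀ t, 1 ≤ t → MemLp (X t) 2 P)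
    (hmean : ∀ t, 1 ≤ t → P[X t | ℱ (t - 1)] =ᵐ[P] fun _ => μ)
    (hvar : ∀ t, 1 ≤ t →
      ∀ᵐ ω ∂P, (P[fun ω' => (X t ω' - μ) ^ 2 | ℱ (t - 1)]) ω ≤ σ ^ 2)
    (hl_pred : ∀ t, 1 ≤ t → StronglyMeasurable[ℱ (t - 1)] (l t))
    (aCIp aCIm CI : ℕ → Ω → Set ℝ)
    (haCIp : ∀ t ω, aCIp t ω = {m : ℝ |
      (∑ i ∈ Finset.Icc 1 t, (l i ω) ^ 2) / 6 * m ^ 2 -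
        ((∑ i ∈ Finset.Icc 1 t, (l i ω) ^ 2 * X i ω) / 3 -
          ∑ i ∈ Finset.Icc 1 t, l i ω) * m +
        (Real.log (2 / α) - ∑ i ∈ Finset.Icc 1 t, l i ω * X i ω +
          (∑ i ∈ Finset.Icc 1 t, (l i ω) ^ 2 * (X i ω) ^ 2 +
            2 * σ ^ 2 * ∑ i ∈ Finset.Icc 1 t, (l i ω) ^ 2) / 6) < 0})
    (haCIm : ∀ t ω, aCIm t ω = {m : ℝ |
      (∑ i ∈ Finset.Icc 1 t, (l i ω) ^ 2) / 6 * m ^ 2 -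
        ((∑ i ∈ Finset.Icc 1 t, (l i ω) ^ 2 * X i ω) / 3 +
          ∑ i ∈ Finset.Icc 1 t, l i ω) * m +
        (Real.log (2 / α) + ∑ i ∈ Finset.Icc 1 t, l i ω * X i ω +
          (∑ i ∈ Finset.Icc 1 t, (l i ω) ^ 2 * (X i ω) ^ 2 +
            2 * σ ^ 2 * ∑ i ∈ Finset.Icc 1 t, (l i ω) ^ 2) / 6) < 0})
    (hCI : ∀ t ω, CI t ω = Set.univ \ (aCIp t ω ∪ aCIm t ω)) :
    ENNReal.ofReal (1 - α) ≤ P {ω | ∀ t : ℕ, 1 ≤ t → μ ∈ CI t ω} := by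
  obtain ⟨hα0, hα1⟩ := hα
  set M : ℝ → ℕ → Ω → ℝ := fun s t ω => Real.exp (∑ k ∈ Finset.Icc 1 t,
      (s * l k ω * (X k ω - μ) - (l k ω)^2 * ((X k ω - μ)^2 + 2*σ^2)/6)) with hMdef
  have hsm : ∀ s : ℝ, s^2 = 1 → Supermartingale (M s) ℱ P := fun s hs =>
    exp_supermartingale ℱ X l μ σ hX_adapted hX_sq hmean hvar hl_pred s hs
  have hεpos : (0:ℝ) < 2/α := by positivity
  have hville : ∀ s : ℝ, s^2 = 1 → P {ω | ∃ t, 2/α ≤ M s t ω} ≤ ENNReal.ofReal (α/2) := by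
    intro s hs
    have h := ville (hsm s hs) (fun t ω => (Real.exp_pos _).le) hεpos
    have hempty : Finset.Icc 1 0 = (∅ : Finset ℕ) := rfl
    have h0 : (∫ ω, M s 0 ω ∂P) = 1 := by
      simp [hMdef, hempty]
    rw [h0] at h
    have hdiv : (1:ℝ)/(2/α) = α/2 := by
      field_simp
    rwa [hdiv] at h
  set G := {ω | ∀ t : ℕ, 1 ≤ t → μ ∈ CI t ω} with hG
  have hsub : Gᶜ ⊆ {ω | ∃ t, 2/α ≤ M 1 t ω} ∪ {ω | ∃ t, 2/α ≤ M (-1) t ω} := by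
    intro ω hω
    simp only [hG, Set.mem_compl_iff, Set.mem_setOf_eq, not_forall] at hω
    obtain ⟨t, ht, hμ⟩ := hω
    rw [hCI t ω] at hμ
    simp only [Set.mem_diff, Set.mem_univ, true_and, not_not] at hμ
    rcases hμ with hp | hm
    · left
      rw [haCIp t ω] at hp
      simp only [Set.mem_setOf_eq] at hp
      refine ⟨t, ?_⟩
      have hid := sum_id t (fun k => l k ω) (fun k => X k ω) μ σ 1 (Real.log (2/α))
      have h3 : Real.log (2/α) < ∑ i ∈ Finset.Icc 1 t,
          ((1:ℝ) * l i ω * (X i ω - μ) - (l i ω)^2 * ((X i ω - μ)^2 + 2*σ^2)/6) := by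
        linarith [hid, hp]
      calc 2/α = Real.exp (Real.log (2/α)) := (Real.exp_log hεpos).symm
        _ ≤ M 1 t ω := Real.exp_le_exp.2 h3.le
    · right
      rw [haCIm t ω] at hm
      simp only [Set.mem_setOf_eq] at hm
      refine ⟨t, ?_⟩
      have hid := sum_id t (fun k => l k ω) (fun k => X k ω) μ σ (-1) (Real.log (2/α))
      have h3 : Real.log (2/α) < ∑ i ∈ Finset.Icc 1 t,
          ((-1:ℝ) * l i ω * (X i ω - μ) - (l i ω)^2 * ((X i ω - μ)^2 + 2*σ^2)/6) := by
        linarith [hid, hm]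
      calc 2/α = Real.exp (Real.log (2/α)) := (Real.exp_log hεpos).symm
        _ ≤ M (-1) t ω := Real.exp_le_exp.2 h3.le
  have hbad : P Gᶜ ≤ ENNReal.ofReal α := by
    calc P Gᶜ ≤ P ({ω | ∃ t, 2/α ≤ M 1 t ω} ∪ {ω | ∃ t, 2/α ≤ M (-1) t ω}) :=
          measure_mono hsub
      _ ≤ P {ω | ∃ t, 2/α ≤ M 1 t ω} + P {ω | ∃ t, 2/α ≤ M (-1) t ω} :=
          measure_union_le _ _
      _ ≤ ENNReal.ofReal (α/2) + ENNReal.ofReal (α/2) :=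
          add_le_add (hville 1 (by norm_num)) (hville (-1) (by norm_num))
      _ = ENNReal.ofReal α := by
          rw [← ENNReal.ofReal_add (by linarith) (by linarith)]
          norm_num
  have huniv : (1:ENNReal) ≤ P G + P Gᶜ := by
    have h1 : (Set.univ : Set Ω) = G ∪ Gᶜ := (Set.union_compl_self G).symm
    calc (1:ENNReal) = P Set.univ := (measure_univ (μ := P)).symm
      _ = P (G ∪ Gᶜ) := by rw [h1]
      _ ≤ P G + P Gᶜ := measure_union_le _ _
  have h4 : ENNReal.ofReal (1-α) + ENNReal.ofReal α ≤ P G + ENNReal.ofReal α := by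
    rw [← ENNReal.ofReal_add (by linarith) hα0.le]
    have he : (1 - α + α : ℝ) = 1 := by ring
    rw [he, ENNReal.ofReal_one]
    exact le_trans huniv (add_le_add le_rfl hbad)
  exact (ENNReal.add_le_add_iff_right ENNReal.ofReal_ne_top).1 h4
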